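/- Let A₁, …, A_k be finite nonempty sets of integers, and for each i let A_i' ⊆ A_i be the set consisting of the minimum and maximum elements of A_i. Let S = A₁ + ⋯ + A_k, S_i = A₁ + ⋯ + A_{i−1} + A_{i+1} + ⋯ + A_k, S_i' = A₁ + ⋯ + A_{i−1} + A_i' + A_{i+1} + ⋯ + A_k, and S' = ⋃_{i=1}^k S_i'. Then |S| ≥ |S'| ≥ (1/(k−1)) ∑_{i=1}^k |S_i| − 1/(k−1). -/

import Mathlib

/-!
Write `a i ≤ b i` for the extreme elements of `A i` and `T m` for the sum in which the first `m`
summands are `b` and the others `a`. The intervals `(T i, T (i + 1)]`, `i < k`, tile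
`(∑ a, ∑ b]`, which contains every point of `S'` except `∑ a`. Sending `x ∈ S_i` to `a i + x`
when that is at most `T i`, and to `b i + x` otherwise, injects `S_i` into `S'` while avoiding the
`i`-th tile. Hence each point of `S'` other than `∑ a` is hit by at most `k - 1` of these `k`
injections, and `∑ |S_i| ≤ (k - 1) |S'| + 1`.
-/

open Pointwise Finset

namespace Finset

variable {ι α : Type*}

section Bounds

variable [AddCommMonoid α] [PartialOrder α] [IsOrderedAddMonoid α] [DecidableEq α]
  {s : Finset ι} {f : ι → Finset α} {x : α}

lemma sum_le_of_mem_sum {lo : ι → α} (h : ∀ i ∈ s, ∀ y ∈ f i, lo i ≤ y)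
    (hx : x ∈ ∑ i ∈ s, f i) : ∑ i ∈ s, lo i ≤ x := by
  rw [← mem_coe, coe_sum, Set.mem_finsetSum] at hx
  obtain ⟨g, hg, rfl⟩ := hx
  exact sum_le_sum fun i hi => h i hi (g i) (hg hi)

lemma le_sum_of_mem_sum {hi : ι → α} (h : ∀ i ∈ s, ∀ y ∈ f i, y ≤ hi i)
    (hx : x ∈ ∑ i ∈ s, f i) : x ≤ ∑ i ∈ s, hi i := by
  rw [← mem_coe, coe_sum, Set.mem_finsetSum] at hx
  obtain ⟨g, hg, rfl⟩ := hx
  exact sum_le_sum fun i hi => h i hi (g i) (hg hi)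

end Bounds

lemma sum_card_le_card_sub_one_mul_add_one [Fintype ι] [DecidableEq α] {S : Finset α}
    {V : ι → Finset α} (μ : α) (hV : ∀ i, V i ⊆ S) (hmiss : ∀ s ∈ S, s ≠ μ → ∃ i, s ∉ V i) :
    ∑ i, #(V i) ≤ (Fintype.card ι - 1) * #S + 1 := by
  have hcount : ∀ s ∈ S,
      #(univ.filter (s ∈ V ·)) ≤ (Fintype.card ι - 1) + if s = μ then 1 else 0 := by
    intro s hs
    by_cases hsμ : s = μ
    · have := card_filter_le (univ : Finset ι) (s ∈ V ·)
      rw [card_univ] at this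
      rw [if_pos hsμ]
      omega
    · obtain ⟨i, hi⟩ := hmiss s hs hsμ
      have : #(univ.filter (s ∈ V ·)) < Fintype.card ι :=
        card_lt_card (filter_ssubset.2 ⟨i, mem_univ i, hi⟩)
      rw [if_neg hsμ]
      omega
  calc ∑ i, #(V i) = ∑ i, ∑ s ∈ S, if s ∈ V i then 1 else 0 := by
        refine sum_congr rfl fun i _ => ?_
        rw [← card_filter, filter_mem_eq_inter, inter_eq_right.2 (hV i)]
    _ = ∑ s ∈ S, #(univ.filter (s ∈ V ·)) := by
        rw [sum_comm]
        exact sum_congr rfl fun s _ => (card_filter _ _).symm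
    _ ≤ ∑ s ∈ S, ((Fintype.card ι - 1) + if s = μ then 1 else 0) := sum_le_sum hcount
    _ ≤ (Fintype.card ι - 1) * #S + 1 := by
        rw [sum_add_distrib, sum_const, smul_eq_mul, mul_comm, sum_ite_eq']
        split_ifs <;> omega

end Finset

lemma exists_lt_mem_Ioc_succ {α : Type*} [LinearOrder α] (f : ℕ → α) {x : α} :
    ∀ {n : ℕ}, x ∈ Set.Ioc (f 0) (f n) → ∃ m < n, x ∈ Set.Ioc (f m) (f (m + 1))
  | 0, hx => absurd hx.2 (not_le.2 hx.1)
  | n + 1, hx => by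
    by_cases hxn : x ≤ f n
    · obtain ⟨m, hm, hxm⟩ := exists_lt_mem_Ioc_succ f ⟨hx.1, hxn⟩
      exact ⟨m, hm.trans n.lt_succ_self, hxm⟩
    · exact ⟨n, n.lt_succ_self, not_le.1 hxn, hx.2⟩

section Staircase

variable {k : ℕ} (a b : Fin k → ℤ)

def staircase (m : ℕ) : ℤ := ∑ j : Fin k, if (j : ℕ) < m then b j else a j

lemma staircase_zero : staircase a b 0 = ∑ j, a j := by simp [staircase]

lemma staircase_of_le {m : ℕ} (hm : k ≤ m) : staircase a b m = ∑ j, b j := by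
  simp [staircase, fun j : Fin k => j.isLt.trans_le hm]

lemma staircase_succ (i : Fin k) : staircase a b (i + 1) = staircase a b i + (b i - a i) := by
  have hstep : ∀ j : Fin k, ((if (j : ℕ) < i + 1 then b j else a j) -
      if (j : ℕ) < i then b j else a j) = if j = i then b i - a i else 0 := by
    intro j
    by_cases hji : j = i
    · simp [hji]
    · have : (j : ℕ) ≠ i := Fin.val_ne_of_ne hji
      rw [if_neg hji]
      split_ifs <;> omega
  rw [← sub_eq_iff_eq_add', staircase, staircase, ← sum_sub_distrib,
    sum_congr rfl fun j _ => hstep j, sum_ite_eq', if_pos (mem_univ i)]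

def stepShift (i : Fin k) (x : ℤ) : ℤ :=
  if a i + x ≤ staircase a b i then a i + x else b i + x

variable {a b}

lemma stepShift_strictMono {i : Fin k} (hab : a i ≤ b i) : StrictMono (stepShift a b i) := by
  intro x y hxy
  unfold stepShift
  split_ifs <;> omega

lemma stepShift_notMem_Ioc (i : Fin k) (x : ℤ) :
    stepShift a b i x ∉ Set.Ioc (staircase a b i) (staircase a b (i + 1)) := by
  rw [staircase_succ, Set.mem_Ioc]
  unfold stepShift
  split_ifs <;> omega

lemma stepShift_mem_add (i : Fin k) {s : Finset ℤ} {x : ℤ} (hx : x ∈ s) :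
    stepShift a b i x ∈ ({a i, b i} : Finset ℤ) + s := by
  unfold stepShift
  split_ifs
  · exact add_mem_add (mem_insert_self _ _) hx
  · exact add_mem_add (mem_insert_of_mem (mem_singleton_self _)) hx

end Staircase

section ExtremeSumset

variable {k : ℕ}

def extremeSumset (A : Fin k → Finset ℤ) (a b : Fin k → ℤ) : Finset ℤ :=
  univ.biUnion fun i => ({a i, b i} : Finset ℤ) + ∑ j ∈ univ.erase i, A j

variable {A : Fin k → Finset ℤ} {a b : Fin k → ℤ}

lemma extremeSumset_subset_sum (ha_mem : ∀ i, a i ∈ A i) (hb_mem : ∀ i, b i ∈ A i) :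
    extremeSumset A a b ⊆ ∑ i, A i := by
  refine biUnion_subset.2 fun i _ => ?_
  rw [← add_sum_erase univ A (mem_univ i)]
  exact add_subset_add_right (insert_subset (ha_mem i) (singleton_subset_iff.2 (hb_mem i)))

lemma mem_Ioc_staircase_of_mem_extremeSumset (ha_mem : ∀ i, a i ∈ A i)
    (hb_mem : ∀ i, b i ∈ A i) (ha_le : ∀ i, ∀ y ∈ A i, a i ≤ y)
    (hb_ge : ∀ i, ∀ y ∈ A i, y ≤ b i) {s : ℤ} (hs : s ∈ extremeSumset A a b)
    (hs_ne : s ≠ ∑ i, a i) : s ∈ Set.Ioc (staircase a b 0) (staircase a b k) := by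
  have hs_sum := extremeSumset_subset_sum ha_mem hb_mem hs
  rw [staircase_zero, staircase_of_le a b le_rfl]
  exact ⟨(sum_le_of_mem_sum (fun i _ => ha_le i) hs_sum).lt_of_ne' hs_ne,
    le_sum_of_mem_sum (fun i _ => hb_ge i) hs_sum⟩

lemma sum_card_sum_erase_le (ha_mem : ∀ i, a i ∈ A i) (hb_mem : ∀ i, b i ∈ A i)
    (ha_le : ∀ i, ∀ y ∈ A i, a i ≤ y) (hb_ge : ∀ i, ∀ y ∈ A i, y ≤ b i) :
    ∑ i, #(∑ j ∈ univ.erase i, A j) ≤ (k - 1) * #(extremeSumset A a b) + 1 := by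
  set V : Fin k → Finset ℤ := fun i => (∑ j ∈ univ.erase i, A j).image (stepShift a b i)
  have hV_card : ∀ i, #(V i) = #(∑ j ∈ univ.erase i, A j) := fun i =>
    card_image_of_injective _ (stepShift_strictMono (ha_le i _ (hb_mem i))).injective
  have hV_sub : ∀ i, V i ⊆ extremeSumset A a b := fun i =>
    image_subset_iff.2 fun _ hx => mem_biUnion.2 ⟨i, mem_univ i, stepShift_mem_add i hx⟩
  have hV_miss : ∀ s ∈ extremeSumset A a b, s ≠ ∑ i, a i → ∃ i, s ∉ V i := by
    intro s hs hs_ne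
    obtain ⟨m, hm, hsm⟩ := exists_lt_mem_Ioc_succ (staircase a b)
      (mem_Ioc_staircase_of_mem_extremeSumset ha_mem hb_mem ha_le hb_ge hs hs_ne)
    refine ⟨⟨m, hm⟩, fun hsV => ?_⟩
    obtain ⟨x, -, rfl⟩ := mem_image.1 hsV
    exact stepShift_notMem_Ioc (a := a) (b := b) ⟨m, hm⟩ x hsm
  simpa [hV_card] using sum_card_le_card_sub_one_mul_add_one _ hV_sub hV_miss

end ExtremeSumset

theorem superadditivity_with_extreme_elements_general (k : ℕ)
    (A : Fin k → Finset ℤ) (hA : ∀ i, (A i).Nonempty) :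
    (Finset.univ.biUnion fun i =>
        ({(A i).min' (hA i), (A i).max' (hA i)} : Finset ℤ) +
          ∑ j ∈ Finset.univ.erase i, A j).card ≤ (∑ i, A i).card ∧
    (∑ i, (∑ j ∈ Finset.univ.erase i, A j).card) - 1 ≤
      (k - 1) * (Finset.univ.biUnion fun i =>
        ({(A i).min' (hA i), (A i).max' (hA i)} : Finset ℤ) +
          ∑ j ∈ Finset.univ.erase i, A j).card := by
  have ha_mem : ∀ i, (A i).min' (hA i) ∈ A i := fun i => min'_mem _ _
  have hb_mem : ∀ i, (A i).max' (hA i) ∈ A i := fun i => max'_mem _ _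
  have ha_le : ∀ i, ∀ y ∈ A i, (A i).min' (hA i) ≤ y := fun i _ hy => min'_le _ _ hy
  have hb_ge : ∀ i, ∀ y ∈ A i, y ≤ (A i).max' (hA i) := fun i _ hy => le_max' _ _ hy
  exact ⟨card_le_card (extremeSumset_subset_sum ha_mem hb_mem),
    Nat.sub_le_of_le_add (sum_card_sum_erase_le ha_mem hb_mem ha_le hb_ge)⟩

theorem superadditivity_with_extreme_elements (k : ℕ) (hk : 2 ≤ k)
    (A : Fin k → Finset ℤ) (hA : ∀ i, (A i).Nonempty) :
    (Finset.univ.biUnion fun i =>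
        ({(A i).min' (hA i), (A i).max' (hA i)} : Finset ℤ) +
          ∑ j ∈ Finset.univ.erase i, A j).card ≤ (∑ i, A i).card ∧
    (∑ i, (∑ j ∈ Finset.univ.erase i, A j).card) - 1 ≤
      (k - 1) * (Finset.univ.biUnion fun i =>
        ({(A i).min' (hA i), (A i).max' (hA i)} : Finset ℤ) +
          ∑ j ∈ Finset.univ.erase i, A j).card :=
  superadditivity_with_extreme_elements_general k A hA
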